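/- Closed-form power series identity: ∑_{m≥1} binom(2m-k, m+1)·x^{m-1} = (1/(x²√(1-4x)))·((1 - √(1-4x))/2)^{k+2} for 0 < x < 1/4 and integer k ≥ 1 (the sum running over m ≥ k). -/

import Mathlib

/-!
Write `s = √(1 - 4x)`, `y = (1 - s) / 2` and `G a = ∑ⱼ C(2j + a, j) x^(j + a)`;
then `G a = y^a / s`. For `a = 0` this is the binomial series of `(1 - 4x)^(-1/2)`,
and `2 G 1 = G 0 - 1`. Pascal's rule gives `G (a + 2) = G (a + 1) - x G a`, which `y^a / s`
also satisfies since `y² = y - x`. After the shift `i = j + 1` the series of the theorem is `G (k + 2) / x²`.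
-/

open scoped Nat

open Polynomial in
theorem ascPochhammer_eval_half_mul_four_pow (n : ℕ) :
    (ascPochhammer ℝ n).eval (1 / 2) * 4 ^ n = n ! * n.centralBinom := by
  induction n with
  | zero => simp
  | succ n ih =>
    have hsucc : ((n : ℝ) + 1) * (n + 1).centralBinom = 2 * (2 * n + 1) * n.centralBinom := by
      exact_mod_cast Nat.succ_mul_centralBinom_succ n
    rw [ascPochhammer_succ_eval, Nat.factorial_succ]
    push_cast
    linear_combination (4 * (1 / 2 + (n : ℝ))) * ih - (n ! : ℝ) * hsucc

theorem Ring.choose_half_add_sub_one_mul_four_pow (n : ℕ) :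
    Ring.choose ((1 / 2 : ℝ) + n - 1) n * 4 ^ n = n.centralBinom := by
  have hpoch := Ring.factorial_nsmul_multichoose_eq_ascPochhammer (1 / 2 : ℝ) n
  rw [Ring.multichoose_eq, Polynomial.ascPochhammer_smeval_eq_eval, nsmul_eq_mul] at hpoch
  have hcentral := ascPochhammer_eval_half_mul_four_pow n
  rw [← hpoch] at hcentral
  have hfact : (n ! : ℝ) ≠ 0 := by positivity
  exact mul_left_cancel₀ hfact (by linear_combination hcentral)

theorem hasSum_centralBinom_mul_pow {x : ℝ} (hx : |x| < 1 / 4) :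
    HasSum (fun n ↦ (n.centralBinom : ℝ) * x ^ n) (1 / √(1 - 4 * x)) := by
  have h4x : 4 * x ∈ Metric.eball (0 : ℝ) 1 := by
    rw [Metric.mem_eball, edist_zero_right, ← ofReal_norm, ENNReal.ofReal_lt_one, norm_mul,
      Real.norm_eq_abs, Real.norm_eq_abs]
    norm_num; linarith
  have hbinom := (Real.one_div_one_sub_rpow_hasFPowerSeriesOnBall_zero (1 / 2)).hasSum h4x
  simp only [FormalMultilinearSeries.ofScalars_apply_eq, zero_add, smul_eq_mul] at hbinom
  rw [Real.sqrt_eq_rpow]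
  refine hbinom.congr_fun fun n ↦ ?_
  rw [mul_pow, ← mul_assoc, Ring.choose_half_add_sub_one_mul_four_pow]

def centralBinomTerm (a : ℕ) (x : ℝ) (j : ℕ) : ℝ := ((2 * j + a).choose j : ℝ) * x ^ (j + a)

namespace centralBinomTerm

variable (a : ℕ) (x : ℝ) (j : ℕ)

theorem zero_left : centralBinomTerm 0 x j = j.centralBinom * x ^ j := by
  simp [centralBinomTerm, Nat.centralBinom_eq_two_mul_choose]

theorem zero_right : centralBinomTerm (a + 1) x 0 = x * centralBinomTerm a x 0 := by
  simp only [centralBinomTerm, mul_zero, zero_add, Nat.choose_zero_right, Nat.cast_one, one_mul]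
  exact pow_succ' x a

theorem one_left : centralBinomTerm 1 x j = centralBinomTerm 0 x (j + 1) / 2 := by
  have h : (2 * (j + 1)).choose (j + 1) = 2 * (2 * j + 1).choose j := by
    rw [show 2 * (j + 1) = 2 * j + 1 + 1 by ring, Nat.choose_succ_succ, Nat.choose_symm_half]
    ring
  simp only [centralBinomTerm, add_zero, h]
  push_cast
  ring

theorem succ_succ : centralBinomTerm (a + 1) x (j + 1) =
    x * centralBinomTerm a x (j + 1) + centralBinomTerm (a + 2) x j := by
  have h : (2 * (j + 1) + (a + 1)).choose (j + 1) =
      (2 * (j + 1) + a).choose (j + 1) + (2 * j + (a + 2)).choose j := by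
    rw [show 2 * (j + 1) + (a + 1) = 2 * j + (a + 2) + 1 by ring, Nat.choose_succ_succ,
      show 2 * j + (a + 2) = 2 * (j + 1) + a by ring]
    ring
  simp only [centralBinomTerm, h]
  push_cast
  ring

end centralBinomTerm

theorem HasSum.centralBinomTerm_add_two {a : ℕ} {x A B : ℝ}
    (hA : HasSum (centralBinomTerm a x) A) (hB : HasSum (centralBinomTerm (a + 1) x) B) :
    HasSum (centralBinomTerm (a + 2) x) (B - x * A) := by
  have h := ((hasSum_nat_add_iff' 1).mpr hB).sub (((hasSum_nat_add_iff' 1).mpr hA).mul_left x)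
  simp only [Finset.sum_range_one, centralBinomTerm.zero_right, centralBinomTerm.succ_succ,
    add_sub_cancel_left] at h
  rwa [show B - x * centralBinomTerm a x 0 - x * (A - centralBinomTerm a x 0) = B - x * A by ring]
    at h

theorem hasSum_centralBinomTerm (a : ℕ) {x : ℝ} (hx : |x| < 1 / 4) :
    HasSum (centralBinomTerm a x) (((1 - √(1 - 4 * x)) / 2) ^ a / √(1 - 4 * x)) := by
  obtain ⟨hxl, hxu⟩ := abs_lt.mp hx
  have h0 : HasSum (centralBinomTerm 0 x) (1 / √(1 - 4 * x)) := by
    simpa only [← centralBinomTerm.zero_left] using hasSum_centralBinom_mul_pow hx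
  set s := √(1 - 4 * x)
  have hs : 0 < s := Real.sqrt_pos.mpr (by linarith)
  have hs2 : s ^ 2 = 1 - 4 * x := Real.sq_sqrt (by linarith)
  induction a using Nat.twoStepInduction with
  | zero => simpa using h0
  | one =>
    have h := ((hasSum_nat_add_iff' 1).mpr h0).div_const 2
    simp only [Finset.sum_range_one, ← centralBinomTerm.one_left] at h
    rwa [show (1 / s - centralBinomTerm 0 x 0) / 2 = ((1 - s) / 2) ^ 1 / s by
      simp [centralBinomTerm]; field_simp] at h
  | more a hA hB =>
    have hy : ((1 - s) / 2) ^ 2 = (1 - s) / 2 - x := by linear_combination hs2 / 4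
    have h := hA.centralBinomTerm_add_two hB
    rwa [show ((1 - s) / 2) ^ (a + 1) / s - x * (((1 - s) / 2) ^ a / s) =
      ((1 - s) / 2) ^ (a + 2) / s by rw [pow_add _ a 2, hy]; ring] at h

theorem catalan_series_identity_one_general (k : ℕ) (x : ℝ) (hx0 : 0 < x)
    (hx : x < 1 / 4) :
    ∑' i : ℕ, (Nat.choose (2 * (i + k) - k) (i + k + 1) : ℝ) * x ^ (i + k - 1) =
      1 / (x ^ 2 * Real.sqrt (1 - 4 * x)) *
        ((1 - Real.sqrt (1 - 4 * x)) / 2) ^ (k + 2) := by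
  have hterm (j : ℕ) :
      (Nat.choose (2 * (j + 1 + k) - k) (j + 1 + k + 1) : ℝ) * x ^ (j + 1 + k - 1) =
        centralBinomTerm (k + 2) x j / x ^ 2 := by
    rw [show 2 * (j + 1 + k) - k = (j + 1 + k + 1) + j by omega, Nat.choose_symm_add,
      show j + 1 + k - 1 = j + k by omega, centralBinomTerm,
      show 2 * j + (k + 2) = (j + 1 + k + 1) + j by omega]
    field_simp
    ring
  have hsum := ((hasSum_centralBinomTerm (k + 2) (abs_lt.mpr ⟨by linarith, hx⟩)).div_const
    (x ^ 2)).congr_fun hterm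
  rw [((hasSum_nat_add_iff (f := fun i ↦ (Nat.choose (2 * (i + k) - k) (i + k + 1) : ℝ) *
    x ^ (i + k - 1)) 1).mp hsum).tsum_eq, Finset.sum_range_one, zero_add,
    Nat.choose_eq_zero_of_lt (show 2 * k - k < k + 1 by omega)]
  push_cast
  ring

theorem catalan_series_identity_one (k : ℕ) (hk : 1 ≤ k) (x : ℝ) (hx0 : 0 < x)
    (hx : x < 1 / 4) :
    ∑' i : ℕ, (Nat.choose (2 * (i + k) - k) (i + k + 1) : ℝ) * x ^ (i + k - 1) =
      1 / (x ^ 2 * Real.sqrt (1 - 4 * x)) *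
        ((1 - Real.sqrt (1 - 4 * x)) / 2) ^ (k + 2) :=
  catalan_series_identity_one_general k x hx0 hx
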